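/- arXiv:2510.15213 — 2 statements merged into one kernel-verified Lean document; each statement's English description precedes it below -/
import Mathlib

section
/- Non-stationary phase bound for the semiclassical kernel. Fix n ≥ 1 and a ∈ C_c^∞(ℝⁿ × ℝⁿ). For every N ∈ ℕ there exists C_N > 0 such that for all h > 0 and all x, y ∈ ℝⁿ: |K_a^h(x,y)| ≤ C_N h^{−n} (1 + |x−y|/h)^{−N}, where K_a^h(x,y) = (2πh)^{−n} ∫_{ℝⁿ} e^{i⟨x−y,ξ⟩/h} a(x,ξ) dξ. -/
open MeasureTheory Real Filter
open scoped Topology RealInnerProductSpace FourierTransform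

noncomputable section

variable (n : ℕ)

/-- Euclidean space `ℝⁿ`. -/
abbrev Euc (n : ℕ) := EuclideanSpace ℝ (Fin n)

/-- The semiclassical kernel
`K_a^h(x,y) = (2πh)^{−n} ∫ e^{i⟨x−y,ξ⟩/h} a(x,ξ) dξ`. -/
def Kker (n : ℕ) (a : Euc n × Euc n → ℂ) (h : ℝ) (x y : Euc n) : ℂ :=
  ((((2 * Real.pi * h) ^ n)⁻¹ : ℝ) : ℂ) *
    ∫ ξ : Euc n, Complex.exp (Complex.I * ((⟪x - y, ξ⟫ / h : ℝ) : ℂ)) * a (x, ξ)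

/-- The semiclassical quantization `Op_h(a)`. -/
def Oph (n : ℕ) (a : Euc n × Euc n → ℂ) (h : ℝ) (u : Euc n → ℂ) (x : Euc n) : ℂ :=
  ∫ y : Euc n, Kker n a h x y * u y

/-- The `L²(ℝⁿ)` norm. -/
def L2E (n : ℕ) (u : Euc n → ℂ) : ℝ := (∫ x : Euc n, ‖u x‖ ^ 2) ^ ((1 : ℝ) / 2)

/-- The sup part of the `C^{0,β}` norm. -/
def supNorm (n : ℕ) (f : Euc n → ℂ) : ℝ := ⨆ x : Euc n, ‖f x‖

/-- The Hölder seminorm `sup_{x≠y} |f(x)−f(y)|/|x−y|^β`. -/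
def holderSemi (n : ℕ) (β : ℝ) (f : Euc n → ℂ) : ℝ :=
  ⨆ p : {q : Euc n × Euc n // q.1 ≠ q.2}, ‖f p.1.1 - f p.1.2‖ / dist p.1.1 p.1.2 ^ β

/-- The `C^{0,β}` norm `sup |f| + sup_{x≠y} |f(x)−f(y)|/|x−y|^β`. -/
def holderNorm (n : ℕ) (β : ℝ) (f : Euc n → ℂ) : ℝ := supNorm n f + holderSemi n β f

/-- `f ∈ C^{0,β}(ℝⁿ)`: `f` is bounded and its `β`-Hölder seminorm is finite. -/
def MemHolderE (n : ℕ) (β : ℝ) (f : Euc n → ℂ) : Prop :=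
  BddAbove (Set.range fun x : Euc n => ‖f x‖) ∧
  BddAbove (Set.range fun p : {q : Euc n × Euc n // q.1 ≠ q.2} =>
    ‖f p.1.1 - f p.1.2‖ / dist p.1.1 p.1.2 ^ β)


section Aux

variable {E F : Type*} [NormedAddCommGroup E] [NormedSpace ℝ E]
  [NormedAddCommGroup F] [NormedSpace ℝ F]

lemma itd_shift (f : E → F) (hf : ContDiff ℝ (⊤ : ℕ∞) f) (c : E) :
    ∀ (m : ℕ) (y : E), iteratedFDeriv ℝ m (fun z => f (c + z)) y = iteratedFDeriv ℝ m f (c + y) := by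
  intro m
  induction m with
  | zero => intro y; ext m0; simp [iteratedFDeriv_zero_apply]
  | succ m ih =>
    intro y
    have hdiff : Differentiable ℝ (iteratedFDeriv ℝ m f) :=
      hf.differentiable_iteratedFDeriv (by exact_mod_cast lt_top_iff_ne_top.2 (by simp))
    have hfd : HasFDerivAt (fun z => iteratedFDeriv ℝ m f (c + z))
        (fderiv ℝ (iteratedFDeriv ℝ m f) (c + y)) y := by
      have h2 : HasFDerivAt (fun z : E => c + z) (ContinuousLinearMap.id ℝ E) y :=
        (hasFDerivAt_id y).const_add c
      have := (hdiff (c + y)).hasFDerivAt.comp y h2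
      rwa [ContinuousLinearMap.comp_id] at this
    ext m0
    rw [iteratedFDeriv_succ_apply_left, iteratedFDeriv_succ_apply_left]
    congr 2
    have : (fun z => iteratedFDeriv ℝ m (fun z' => f (c + z')) z)
        = fun z => iteratedFDeriv ℝ m f (c + z) := funext ih
    rw [show iteratedFDeriv ℝ m (fun z' => f (c + z')) = _ from this, hfd.fderiv]


lemma partial_norm_le {n : ℕ} (a : Euc n × Euc n → ℂ) (ha : ContDiff ℝ (⊤ : ℕ∞) a)
    (m : ℕ) (x ξ : Euc n) :
    ‖iteratedFDeriv ℝ m (fun ξ => a (x, ξ)) ξ‖ ≤ ‖iteratedFDeriv ℝ m a (x, ξ)‖ := by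
  set g : Euc n →L[ℝ] Euc n × Euc n := ContinuousLinearMap.inr ℝ (Euc n) (Euc n) with hg
  have hgn : ‖g‖ ≤ 1 := by
    apply ContinuousLinearMap.opNorm_le_bound _ zero_le_one
    intro v; simp [hg, Prod.norm_def]
  set fx : Euc n × Euc n → ℂ := fun p => a ((x, 0) + p) with hfx
  have hfxc : ContDiff ℝ (⊤ : ℕ∞) fx := ha.comp (contDiff_const.add contDiff_id)
  have hcomp : (fun ξ => a (x, ξ)) = fx ∘ g := by
    funext ξ; simp [hfx, hg, Prod.ext_iff]
  rw [hcomp, g.iteratedFDeriv_comp_right hfxc ξ (by exact_mod_cast le_top)]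
  calc ‖(iteratedFDeriv ℝ m fx (g ξ)).compContinuousLinearMap fun _ => g‖
      ≤ ‖iteratedFDeriv ℝ m fx (g ξ)‖ * ∏ _i : Fin m, ‖g‖ :=
        ContinuousMultilinearMap.norm_compContinuousLinearMap_le _ _
    _ ≤ ‖iteratedFDeriv ℝ m fx (g ξ)‖ * 1 := by
        apply mul_le_mul_of_nonneg_left _ (norm_nonneg _)
        calc ∏ _i : Fin m, ‖g‖ ≤ ∏ _i : Fin m, 1 :=
              Finset.prod_le_prod (fun _ _ => norm_nonneg _) (fun _ _ => hgn)
          _ = 1 := by simp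
    _ = ‖iteratedFDeriv ℝ m a (x, ξ)‖ := by
        rw [mul_one, itd_shift a ha (x, 0) m (g ξ)]
        congr 2
        simp [hg, Prod.ext_iff]

variable {n : ℕ}

lemma bx_supp (a : Euc n × Euc n → ℂ) (hac : HasCompactSupport a) (x : Euc n) :
    HasCompactSupport (fun ξ => a (x, ξ)) := by
  have hS : IsCompact (Prod.snd '' tsupport a) := hac.image continuous_snd
  apply HasCompactSupport.of_support_subset_isCompact hS
  intro ξ hξ
  exact ⟨(x, ξ), subset_tsupport a hξ, rfl⟩

lemma intbound (a : Euc n × Euc n → ℂ) (ha : ContDiff ℝ (⊤ : ℕ∞) a) (hac : HasCompactSupport a)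
    (m : ℕ) :
    ∃ C : ℝ, 0 ≤ C ∧ ∀ x : Euc n,
      (∫ ξ : Euc n, ‖iteratedFDeriv ℝ m (fun ξ => a (x, ξ)) ξ‖) ≤ C := by
  obtain ⟨D, hD⟩ := (ha.continuous_iteratedFDeriv (m := m) (by exact_mod_cast le_top)).bounded_above_of_compact_support
    (hac.iteratedFDeriv m)
  set S : Set (Euc n) := Prod.snd '' tsupport a with hSdef
  have hS : IsCompact S := hac.image continuous_snd
  set D' := max D 0 with hD'
  refine ⟨D' * (volume S).toReal, by positivity, fun x => ?_⟩
  have hbx : ContDiff ℝ (⊤ : ℕ∞) (fun ξ => a (x, ξ)) := ha.comp (contDiff_const.prodMk contDiff_id)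
  have hint : Integrable (fun ξ : Euc n => ‖iteratedFDeriv ℝ m (fun ξ => a (x, ξ)) ξ‖) := by
    apply Continuous.integrable_of_hasCompactSupport
    · exact (hbx.continuous_iteratedFDeriv (by exact_mod_cast le_top)).norm
    · exact ((bx_supp a hac x).iteratedFDeriv m).norm
  have hsupp : Function.support (iteratedFDeriv ℝ m (fun ξ => a (x, ξ))) ⊆ S := by
    refine (support_iteratedFDeriv_subset m).trans ?_
    apply closure_minimal _ hS.isClosed
    intro ξ hξ
    exact ⟨(x, ξ), subset_tsupport a hξ, rfl⟩
  calc (∫ ξ : Euc n, ‖iteratedFDeriv ℝ m (fun ξ => a (x, ξ)) ξ‖)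
      ≤ ∫ ξ : Euc n, S.indicator (fun _ => D') ξ := by
        apply integral_mono hint
        · exact (integrable_indicator_iff hS.measurableSet).2
            (integrableOn_const hS.measure_lt_top.ne)
        · intro ξ
          by_cases hξ : ξ ∈ S
          · simp only [Set.indicator_of_mem hξ]
            exact le_trans (le_trans (partial_norm_le a ha m x ξ) (hD _)) (le_max_left _ _)
          · have : iteratedFDeriv ℝ m (fun ξ => a (x, ξ)) ξ = 0 := by
              by_contra h
              exact hξ (hsupp h)
            simp [Set.indicator_of_notMem hξ, this]
    _ = D' * (volume S).toReal := by
        rw [integral_indicator hS.measurableSet]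
        simp [mul_comm, measureReal_def]

lemma fourier_rel (a : Euc n × Euc n → ℂ) (x w : Euc n) :
    (∫ ξ : Euc n, Complex.exp (Complex.I * ((⟪w, ξ⟫ : ℝ) : ℂ)) * a (x, ξ))
      = 𝓕 (fun ξ => a (x, ξ)) (-(2 * π)⁻¹ • w) := by
  rw [Real.fourier_eq']
  apply integral_congr_ae
  filter_upwards with ξ
  rw [smul_eq_mul]
  congr 1
  rw [mul_comm]
  congr 1
  have key : (-2 * π * ⟪ξ, -(2 * π)⁻¹ • w⟫ : ℝ) = ⟪w, ξ⟫ := by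
    rw [real_inner_smul_right, real_inner_comm]
    have hπ : (π : ℝ) ≠ 0 := pi_ne_zero
    field_simp
  rw [key]

lemma aux2 (a : Euc n × Euc n → ℂ) (ha : ContDiff ℝ (⊤ : ℕ∞) a) (hac : HasCompactSupport a)
    (k : ℕ) :
    ∃ C : ℝ, 0 ≤ C ∧ ∀ (x w : Euc n),
      ‖w‖ ^ k * ‖∫ ξ : Euc n, Complex.exp (Complex.I * ((⟪w, ξ⟫ : ℝ) : ℂ)) * a (x, ξ)‖ ≤ C := by
  choose bnd hbnd0 hbnd using fun m => intbound a ha hac m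
  refine ⟨(2 * π) ^ k * (2 ^ k *
      ∑ p ∈ Finset.range 1 ×ˢ Finset.range (k + 1), bnd p.2), ?_, ?_⟩
  · have : 0 ≤ ∑ p ∈ Finset.range 1 ×ˢ Finset.range (k + 1), bnd p.2 :=
      Finset.sum_nonneg fun p _ => hbnd0 p.2
    positivity
  intro x w
  set b : Euc n → ℂ := fun ξ => a (x, ξ) with hb
  have hbx : ContDiff ℝ (k : ℕ∞) b := (ha.comp (contDiff_const.prodMk contDiff_id)).of_le (by exact_mod_cast le_top)
  have hbsupp := bx_supp a hac x
  have h'f : ∀ (i m : ℕ), (i : ℕ∞) ≤ (0 : ℕ∞) → (m : ℕ∞) ≤ (k : ℕ∞) →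
      Integrable (fun ξ : Euc n => ‖ξ‖ ^ i * ‖iteratedFDeriv ℝ m b ξ‖) := by
    intro i m _ _
    apply Continuous.integrable_of_hasCompactSupport
    · exact (continuous_norm.pow i).mul
        (((ha.comp (contDiff_const.prodMk contDiff_id)).continuous_iteratedFDeriv
          ((by exact_mod_cast le_top))).norm)
    · exact ((hbsupp.iteratedFDeriv m).norm.mul_left)
  have key := Real.pow_mul_norm_iteratedFDeriv_fourier_le (K := (0 : ℕ∞))
    (N := (k : ℕ∞)) hbx h'f (le_refl (0 : ℕ∞)) (le_refl (k : ℕ∞)) (-(2 * π)⁻¹ • w)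
  rw [norm_iteratedFDeriv_zero] at key
  simp only [Nat.cast_zero, mul_zero, zero_add, pow_zero, one_mul, Nat.zero_add] at key
  have hnv : ‖-(2 * π)⁻¹ • w‖ = (2 * π)⁻¹ * ‖w‖ := by
    rw [norm_smul, Real.norm_eq_abs, abs_neg, abs_of_nonneg (by positivity)]
  rw [fourier_rel a x w]
  have h2π : (0:ℝ) < 2 * π := by positivity
  have hwk : ‖w‖ ^ k * ‖𝓕 b (-(2 * π)⁻¹ • w)‖
      = (2 * π) ^ k * (‖-(2 * π)⁻¹ • w‖ ^ k * ‖𝓕 b (-(2 * π)⁻¹ • w)‖) := by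
    rw [hnv, ← mul_assoc, ← mul_pow, ← mul_assoc, mul_inv_cancel₀ h2π.ne', one_mul]
  rw [hwk]
  apply mul_le_mul_of_nonneg_left _ (by positivity)
  refine le_trans key ?_
  apply mul_le_mul_of_nonneg_left _ (by positivity)
  apply Finset.sum_le_sum
  intro p hp
  have hp1 : p.1 = 0 := by
    simp only [Finset.mem_product, Finset.mem_range] at hp
    omega
  rw [hp1]
  simp only [pow_zero, one_mul]
  exact hbnd p.2 x

lemma aux3 (a : Euc n × Euc n → ℂ) (ha : ContDiff ℝ (⊤ : ℕ∞) a) (hac : HasCompactSupport a)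
    (N : ℕ) :
    ∃ C : ℝ, 0 < C ∧ ∀ (x w : Euc n),
      ‖∫ ξ : Euc n, Complex.exp (Complex.I * ((⟪w, ξ⟫ : ℝ) : ℂ)) * a (x, ξ)‖
        * (1 + ‖w‖) ^ N ≤ C := by
  obtain ⟨C0, hC00, hC0⟩ := aux2 a ha hac 0
  obtain ⟨CN, hCN0, hCN⟩ := aux2 a ha hac N
  refine ⟨2 ^ N * (C0 + CN) + 1, by positivity, fun x w => ?_⟩
  set I := ∫ ξ : Euc n, Complex.exp (Complex.I * ((⟪w, ξ⟫ : ℝ) : ℂ)) * a (x, ξ) with hI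
  have h0 := hC0 x w
  have hN := hCN x w
  rw [pow_zero, one_mul] at h0
  have hpow : (1 + ‖w‖) ^ N ≤ 2 ^ N * (1 + ‖w‖ ^ N) := by
    rcases le_total (‖w‖) 1 with hw | hw
    · calc (1 + ‖w‖) ^ N ≤ 2 ^ N := by
            apply pow_le_pow_left₀ (by positivity)
            linarith
        _ ≤ 2 ^ N * (1 + ‖w‖ ^ N) := by
            nlinarith [pow_nonneg (norm_nonneg w) N, pow_pos (show (0:ℝ) < 2 by norm_num) N]
    · calc (1 + ‖w‖) ^ N ≤ (2 * ‖w‖) ^ N := by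
            apply pow_le_pow_left₀ (by positivity)
            linarith
        _ = 2 ^ N * ‖w‖ ^ N := mul_pow 2 _ N
        _ ≤ 2 ^ N * (1 + ‖w‖ ^ N) := by
            apply mul_le_mul_of_nonneg_left _ (by positivity)
            linarith
  calc ‖I‖ * (1 + ‖w‖) ^ N ≤ ‖I‖ * (2 ^ N * (1 + ‖w‖ ^ N)) :=
        mul_le_mul_of_nonneg_left hpow (norm_nonneg _)
    _ = 2 ^ N * (‖I‖ + ‖w‖ ^ N * ‖I‖) := by ring
    _ ≤ 2 ^ N * (C0 + CN) := by
        apply mul_le_mul_of_nonneg_left _ (by positivity)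
        exact add_le_add h0 hN
    _ ≤ 2 ^ N * (C0 + CN) + 1 := by linarith

end Aux

/-- Non-stationary phase bound for the semiclassical kernel:
`|K_a^h(x,y)| ≤ C_N h^{−n} (1 + |x−y|/h)^{−N}`. -/
theorem kernel_nonstationary_phase_bound
    (n : ℕ) (hn : 1 ≤ n)
    (a : Euc n × Euc n → ℂ) (ha : ContDiff ℝ (⊤ : ℕ∞) a) (hac : HasCompactSupport a) :
    ∀ N : ℕ, ∃ C : ℝ, 0 < C ∧
      ∀ h : ℝ, 0 < h → ∀ x y : Euc n,
        ‖Kker n a h x y‖ ≤ C * h ^ (-(n : ℝ)) * (1 + dist x y / h) ^ (-(N : ℝ)) := by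
  intro N
  obtain ⟨C, hC0, hC⟩ := aux3 a ha hac N
  refine ⟨C, hC0, fun h hh x y => ?_⟩
  set w : Euc n := h⁻¹ • (x - y) with hw
  have hinner : ∀ ξ : Euc n, (⟪x - y, ξ⟫ / h : ℝ) = ⟪w, ξ⟫ := by
    intro ξ
    rw [hw, real_inner_smul_left]
    ring
  have hI : (∫ ξ : Euc n, Complex.exp (Complex.I * ((⟪x - y, ξ⟫ / h : ℝ) : ℂ)) * a (x, ξ))
      = ∫ ξ : Euc n, Complex.exp (Complex.I * ((⟪w, ξ⟫ : ℝ) : ℂ)) * a (x, ξ) := by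
    apply integral_congr_ae
    filter_upwards with ξ
    rw [hinner ξ]
  have hwnorm : ‖w‖ = dist x y / h := by
    rw [hw, norm_smul, Real.norm_eq_abs, abs_of_nonneg (inv_nonneg.2 hh.le),
      dist_eq_norm, div_eq_inv_mul]
  have hd0 : 0 ≤ dist x y / h := div_nonneg dist_nonneg hh.le
  have hb0 : (0:ℝ) < 1 + dist x y / h := by linarith
  -- rpow rewrites
  have hrn : h ^ (-(n : ℝ)) = ((h ^ n)⁻¹ : ℝ) := by
    rw [Real.rpow_neg hh.le, Real.rpow_natCast]
  have hrN : (1 + dist x y / h) ^ (-(N : ℝ)) = (((1 + dist x y / h) ^ N)⁻¹ : ℝ) := by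
    rw [Real.rpow_neg hb0.le, Real.rpow_natCast]
  rw [hrn, hrN]
  have hKnorm : ‖Kker n a h x y‖
      = ((2 * π * h) ^ n)⁻¹ * ‖∫ ξ : Euc n, Complex.exp (Complex.I * ((⟪w, ξ⟫ : ℝ) : ℂ)) * a (x, ξ)‖ := by
    rw [Kker, hI, norm_mul, Complex.norm_real, Real.norm_eq_abs, abs_of_nonneg]
    positivity
  rw [hKnorm]
  have hIb : ‖∫ ξ : Euc n, Complex.exp (Complex.I * ((⟪w, ξ⟫ : ℝ) : ℂ)) * a (x, ξ)‖
      ≤ C * ((1 + dist x y / h) ^ N)⁻¹ := by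
    have := hC x w
    rw [hwnorm] at this
    rw [← le_div_iff₀ (by positivity)] at this
    calc _ ≤ C / (1 + dist x y / h) ^ N := this
      _ = C * ((1 + dist x y / h) ^ N)⁻¹ := div_eq_mul_inv _ _
  have hcoef : ((2 * π * h) ^ n)⁻¹ ≤ (h ^ n)⁻¹ := by
    apply inv_anti₀ (by positivity)
    rw [mul_pow]
    have h2π : (1:ℝ) ≤ (2 * π) ^ n := one_le_pow₀ (by nlinarith [pi_gt_three])
    nlinarith [pow_pos hh n, pow_nonneg hh.le n]
  calc ((2 * π * h) ^ n)⁻¹ * ‖∫ ξ : Euc n, Complex.exp (Complex.I * ((⟪w, ξ⟫ : ℝ) : ℂ)) * a (x, ξ)‖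
      ≤ (h ^ n)⁻¹ * (C * ((1 + dist x y / h) ^ N)⁻¹) :=
        mul_le_mul hcoef hIb (norm_nonneg _) (by positivity)
    _ = C * (h ^ n)⁻¹ * ((1 + dist x y / h) ^ N)⁻¹ := by ring


end
end

section
/- Pointwise bound for the commutator kernel with a Hölder weight. Fix n ≥ 1, β ∈ [0,1] and a ∈ C_c^∞(ℝⁿ × ℝⁿ). For every N ∈ ℕ there exists C > 0 such that for all f ∈ C^{0,β}(ℝⁿ), all h > 0 and all x, y ∈ ℝⁿ: |(f(x) − f(y)) K_a^h(x,y)| ≤ C ‖f‖_{C^{0,β}} h^{−n+β} (1 + |x−y|/h)^{−(N−β)}, where K_a^h(x,y) = (2πh)^{−n} ∫_{ℝⁿ} e^{i⟨x−y,ξ⟩/h} a(x,ξ) dξ. -/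
open MeasureTheory Real Filter
open scoped Topology RealInnerProductSpace

noncomputable section

variable (n : ℕ)

open FourierTransform

-- derivative-norm bound for the slice map
lemma aux_inr_deriv_le (n : ℕ) (x : Euc n) (i : ℕ) (hi : 1 ≤ i) (ξ : Euc n) :
    ‖iteratedFDeriv ℝ i (fun ξ' : Euc n => ((x, ξ') : Euc n × Euc n)) ξ‖ ≤ 1 ^ i := by
  obtain ⟨j, rfl⟩ := Nat.exists_eq_add_of_le hi
  set L : Euc n →L[ℝ] Euc n × Euc n :=
    (0 : Euc n →L[ℝ] Euc n).prod (ContinuousLinearMap.id ℝ (Euc n)) with hL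
  have hfd : fderiv ℝ (fun ξ' : Euc n => ((x, ξ') : Euc n × Euc n)) = fun _ => L := by
    funext ξ'
    exact ((hasFDerivAt_const x ξ').prodMk (hasFDerivAt_id ξ')).fderiv
  rw [one_pow, add_comm, ← norm_iteratedFDeriv_fderiv, hfd]
  cases j with
  | zero =>
    rw [norm_iteratedFDeriv_zero]
    refine ContinuousLinearMap.opNorm_le_bound _ zero_le_one fun v => ?_
    simp [hL, Prod.norm_def]
  | succ k =>
    rw [iteratedFDeriv_const_of_ne (Nat.succ_ne_zero k)]
    simp

section Main

variable {n : ℕ} {a : Euc n × Euc n → ℂ}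

/-- Uniform-in-`x` kernel decay:
`‖∫ e^{i⟨x−y,ξ⟩/h} a(x,ξ) dξ‖ ≤ D (2π)^N (1+|x−y|/h)^{-N}` after dividing by `(2πh)^n`. -/
theorem kernel_decay (ha : ContDiff ℝ (⊤ : ℕ∞) a) (hac : HasCompactSupport a) (N : ℕ) :
    ∃ D : ℝ, 0 ≤ D ∧ ∀ (x : Euc n) (w : Euc n),
      (1 + ‖w‖) ^ N * ‖𝓕 (fun ξ => a (x, ξ)) w‖ ≤ D := by
  classical
  -- support radius
  obtain ⟨R₀, hR₀⟩ := hac.isBounded.subset_closedBall (0 : Euc n × Euc n)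
  set R : ℝ := max R₀ 0 with hRdef
  have hR : tsupport a ⊆ Metric.closedBall 0 R :=
    hR₀.trans (Metric.closedBall_subset_closedBall (le_max_left _ _))
  have hR0 : 0 ≤ R := le_max_right _ _
  -- bounds on all derivatives of `a`
  have hM : ∀ m : ℕ, ∃ Mm : ℝ, 0 ≤ Mm ∧ ∀ p, ‖iteratedFDeriv ℝ m a p‖ ≤ Mm := by
    intro m
    obtain ⟨Mm, hMm⟩ := (hac.iteratedFDeriv m).exists_bound_of_continuous
      (ha.continuous_iteratedFDeriv (by exact_mod_cast le_top))
    exact ⟨max Mm 0, le_max_right _ _, fun p => (hMm p).trans (le_max_left _ _)⟩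
  choose M hM0 hMle using hM
  -- pointwise bound on the derivatives of the slices
  have key : ∀ (m : ℕ) (x ξ : Euc n),
      ‖iteratedFDeriv ℝ m (fun ξ' => a (x, ξ')) ξ‖ ≤
        (Nat.factorial m : ℝ) * ∑ i ∈ Finset.range (m + 1), M i := by
    intro m x ξ
    have hT : ContDiff ℝ (⊤ : ℕ∞) (fun ξ' : Euc n => ((x, ξ') : Euc n × Euc n)) :=
      contDiff_const.prodMk contDiff_id
    have := norm_iteratedFDeriv_comp_le (g := a) (f := fun ξ' : Euc n => ((x, ξ') : _))
      ha hT (by exact_mod_cast le_top) ξ (C := ∑ i ∈ Finset.range (m + 1), M i) (D := 1)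
      (fun i hi => (hMle i _).trans (Finset.single_le_sum (fun j _ => hM0 j)
        (Finset.mem_range.2 (Nat.lt_succ_of_le hi))))
      (fun i h1 h2 => aux_inr_deriv_le n x i h1 ξ)
    simpa [Function.comp_def] using this
  -- vanishing of slice derivatives far away
  have hsupp : ∀ (m : ℕ) (x ξ : Euc n), R < ‖ξ‖ →
      iteratedFDeriv ℝ m (fun ξ' => a (x, ξ')) ξ = 0 := by
    intro m x ξ hξ
    have h1 : tsupport (fun ξ' : Euc n => a (x, ξ')) ⊆ Metric.closedBall (0 : Euc n) R := by
      refine closure_minimal ?_ Metric.isClosed_closedBall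
      intro ξ' hξ'
      have hmem : ((x, ξ') : Euc n × Euc n) ∈ tsupport a :=
        subset_closure (by simpa [Function.mem_support] using hξ')
      have hnorm : ‖((x, ξ') : Euc n × Euc n)‖ ≤ R := by
        simpa [mem_closedBall_zero_iff] using hR hmem
      have : ‖ξ'‖ ≤ ‖((x, ξ') : Euc n × Euc n)‖ := by
        rw [Prod.norm_def]; exact le_max_right _ _
      simpa [mem_closedBall_zero_iff] using this.trans hnorm
    by_contra hne
    have hmem : ξ ∈ tsupport fun ξ' : Euc n => a (x, ξ') :=
      support_iteratedFDeriv_subset m (by simpa [Function.mem_support] using hne)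
    have := h1 hmem
    rw [mem_closedBall_zero_iff] at this
    exact absurd this (not_le.2 hξ)
  -- uniform bound for the slices' Schwartz seminorms
  set B : ℕ × ℕ → ℝ := fun km =>
    R ^ km.1 * ((Nat.factorial km.2 : ℝ) * ∑ i ∈ Finset.range (km.2 + 1), M i) with hBdef
  have hB0 : ∀ km, 0 ≤ B km := by
    intro km
    have : 0 ≤ ∑ i ∈ Finset.range (km.2 + 1), M i := Finset.sum_nonneg fun i _ => hM0 i
    positivity
  have hbound : ∀ (k m : ℕ) (x ξ : Euc n),
      ‖ξ‖ ^ k * ‖iteratedFDeriv ℝ m (fun ξ' => a (x, ξ')) ξ‖ ≤ B (k, m) := by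
    intro k m x ξ
    rcases le_or_gt ‖ξ‖ R with hle | hlt
    · have h1 : ‖ξ‖ ^ k ≤ R ^ k := pow_le_pow_left₀ (norm_nonneg ξ) hle k
      exact mul_le_mul h1 (key m x ξ) (norm_nonneg _) (by positivity)
    · rw [hsupp m x ξ hlt]
      simpa using hB0 (k, m)
  -- the slices as Schwartz maps
  set sa : Euc n → SchwartzMap (Euc n) ℂ := fun x =>
    { toFun := fun ξ => a (x, ξ)
      smooth' := by
        have h' : ContDiff ℝ (⊤ : ℕ∞) (fun ξ : Euc n => a (x, ξ)) :=
          ha.comp (contDiff_const.prodMk contDiff_id)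
        exact h'.of_le (by simp)
      decay' := fun k m => ⟨B (k, m), hbound k m x⟩ } with hsadef
  have hsa_apply : ∀ x ξ, sa x ξ = a (x, ξ) := fun _ _ => rfl
  have hsemi : ∀ (k m : ℕ) (x : Euc n),
      SchwartzMap.seminorm ℝ k m (sa x) ≤ B (k, m) := fun k m x =>
    SchwartzMap.seminorm_le_bound ℝ k m (sa x) (hB0 (k, m)) (hbound k m x)
  -- seminorm bounds for the Fourier transform, uniform in `x`
  have hFT : ∀ km : ℕ × ℕ, ∃ A : ℝ, 0 ≤ A ∧ ∀ x : Euc n,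
      schwartzSeminormFamily ℝ (Euc n) ℂ km
        (SchwartzMap.fourierTransformCLM ℝ (sa x)) ≤ A := by
    intro km
    set q : Seminorm ℝ (SchwartzMap (Euc n) ℂ) :=
      (schwartzSeminormFamily ℝ (Euc n) ℂ km).comp
        (SchwartzMap.fourierTransformCLM ℝ (V := Euc n) (E := ℂ) : _ →ₗ[ℝ] _) with hqdef
    have hq : Continuous q := by
      have h1 : Continuous (schwartzSeminormFamily ℝ (Euc n) ℂ km) :=
        (schwartz_withSeminorms ℝ (Euc n) ℂ).continuous_seminorm km
      exact h1.comp (SchwartzMap.fourierTransformCLM ℝ (V := Euc n) (E := ℂ)).continuous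
    obtain ⟨s, C, hC0, hCle⟩ :=
      Seminorm.bound_of_continuous (schwartz_withSeminorms ℝ (Euc n) ℂ) q hq
    refine ⟨(C : ℝ) * ∑ i ∈ s, B i, mul_nonneg C.2 (Finset.sum_nonneg fun i _ => hB0 i), fun x => ?_⟩
    have h2 := Seminorm.le_def.mp hCle (sa x)
    rw [Seminorm.smul_apply] at h2
    have h3 : (s.sup (schwartzSeminormFamily ℝ (Euc n) ℂ)) (sa x) ≤ ∑ i ∈ s, B i := by
      refine Seminorm.finset_sup_apply_le (Finset.sum_nonneg fun i _ => hB0 i) fun i hi => ?_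
      exact (hsemi i.1 i.2 x).trans (Finset.single_le_sum (fun j _ => hB0 j) hi)
    calc schwartzSeminormFamily ℝ (Euc n) ℂ km (SchwartzMap.fourierTransformCLM ℝ (sa x))
        = q (sa x) := rfl
      _ ≤ (C : ℝ) * (s.sup (schwartzSeminormFamily ℝ (Euc n) ℂ)) (sa x) := h2
      _ ≤ (C : ℝ) * ∑ i ∈ s, B i := by
          exact mul_le_mul_of_nonneg_left h3 C.2
  choose A hA0 hAle using hFT
  refine ⟨2 ^ N * ∑ km ∈ Finset.Iic ((N : ℕ), (0 : ℕ)), A km,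
    mul_nonneg (by positivity) (Finset.sum_nonneg fun i _ => hA0 i), fun x w => ?_⟩
  have h1 := SchwartzMap.one_add_le_sup_seminorm_apply (𝕜 := ℝ) (m := ((N : ℕ), (0 : ℕ)))
    le_rfl le_rfl (SchwartzMap.fourierTransformCLM ℝ (sa x)) w
  rw [norm_iteratedFDeriv_zero] at h1
  have h2 : (SchwartzMap.fourierTransformCLM ℝ (sa x)) w = 𝓕 (fun ξ => a (x, ξ)) w := by
    rw [SchwartzMap.fourierTransformCLM_apply]
    rfl
  rw [h2] at h1
  refine h1.trans ?_
  have h3 : ((Finset.Iic ((N : ℕ), (0 : ℕ))).sup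
      (fun m => SchwartzMap.seminorm ℝ m.1 m.2)) (SchwartzMap.fourierTransformCLM ℝ (sa x)) ≤
      ∑ km ∈ Finset.Iic ((N : ℕ), (0 : ℕ)), A km := by
    refine Seminorm.finset_sup_apply_le (Finset.sum_nonneg fun i _ => hA0 i) fun i hi => ?_
    exact (hAle i x).trans (Finset.single_le_sum (fun j _ => hA0 j) hi)
  exact mul_le_mul_of_nonneg_left h3 (by positivity)

end Main

lemma fourier_rewrite {n : ℕ} (a : Euc n × Euc n → ℂ) (h : ℝ) (hpos : 0 < h) (x y : Euc n) :
    ∫ ξ : Euc n, Complex.exp (Complex.I * ((⟪x - y, ξ⟫ / h : ℝ) : ℂ)) * a (x, ξ) =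
      𝓕 (fun ξ => a (x, ξ)) ((-(2 * π * h)⁻¹) • (x - y)) := by
  rw [Real.fourier_eq']
  refine integral_congr_ae (Filter.Eventually.of_forall fun ξ => ?_)
  simp only [smul_eq_mul]
  congr 1
  have hc : (⟪x - y, ξ⟫ / h : ℝ) = -2 * π * ⟪ξ, (-(2 * π * h)⁻¹) • (x - y)⟫ := by
    rw [real_inner_smul_right, real_inner_comm]
    have h2π : π ≠ 0 := Real.pi_ne_zero
    field_simp
  rw [hc, mul_comm]

theorem Kker_bound {n : ℕ} {a : Euc n × Euc n → ℂ}
    (ha : ContDiff ℝ (⊤ : ℕ∞) a) (hac : HasCompactSupport a) (N : ℕ) :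
    ∃ CK : ℝ, 0 < CK ∧ ∀ h : ℝ, 0 < h → ∀ x y : Euc n,
      ‖Kker n a h x y‖ ≤ CK * ((h : ℝ) ^ n)⁻¹ * ((1 + dist x y / h) ^ N)⁻¹ := by
  obtain ⟨D, hD0, hD⟩ := kernel_decay ha hac N
  refine ⟨((2 * π) ^ n)⁻¹ * ((2 * π) ^ N * D) + 1, by positivity, fun h hpos x y => ?_⟩
  set w : Euc n := (-(2 * π * h)⁻¹) • (x - y) with hwdef
  have h2πh : (0 : ℝ) < 2 * π * h := by positivity
  have hw : ‖w‖ = dist x y / (2 * π * h) := by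
    rw [hwdef, norm_smul, Real.norm_eq_abs, abs_neg, abs_inv, abs_of_pos h2πh,
      ← dist_eq_norm, inv_mul_eq_div]
  have hd0 : (0 : ℝ) ≤ dist x y / h := div_nonneg dist_nonneg hpos.le
  have h2π1 : (1 : ℝ) ≤ 2 * π := by nlinarith [Real.pi_gt_three]
  have hcmp : 1 + dist x y / h ≤ (2 * π) * (1 + ‖w‖) := by
    rw [hw]
    have he : (2 * π) * (1 + dist x y / (2 * π * h)) = 2 * π + dist x y / h := by
      field_simp
    rw [he]
    linarith
  have hpow : (1 + dist x y / h) ^ N ≤ (2 * π) ^ N * (1 + ‖w‖) ^ N := by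
    rw [← mul_pow]
    exact pow_le_pow_left₀ (by positivity) hcmp N
  have hbN : (0 : ℝ) < (1 + dist x y / h) ^ N := by positivity
  have hwN : (0 : ℝ) < (1 + ‖w‖) ^ N := by positivity
  have hF : ‖𝓕 (fun ξ => a (x, ξ)) w‖ ≤ D * ((1 + ‖w‖) ^ N)⁻¹ := by
    rw [← div_eq_mul_inv, le_div_iff₀ hwN, mul_comm]
    exact hD x w
  have h4 : ((1 + ‖w‖) ^ N)⁻¹ ≤ (2 * π) ^ N * ((1 + dist x y / h) ^ N)⁻¹ := by
    rw [← div_eq_mul_inv, ← one_div, div_le_div_iff₀ hwN hbN, one_mul]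
    exact hpow
  have hK : ‖Kker n a h x y‖ =
      (((2 * π) ^ n)⁻¹ * ((h : ℝ) ^ n)⁻¹) * ‖𝓕 (fun ξ => a (x, ξ)) w‖ := by
    rw [Kker, fourier_rewrite a h hpos x y, norm_mul, Complex.norm_real, Real.norm_eq_abs,
      abs_of_nonneg (by positivity), mul_pow, mul_inv]
  rw [hK]
  calc (((2 * π) ^ n)⁻¹ * ((h : ℝ) ^ n)⁻¹) * ‖𝓕 (fun ξ => a (x, ξ)) w‖
      ≤ (((2 * π) ^ n)⁻¹ * ((h : ℝ) ^ n)⁻¹) *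
        (D * ((2 * π) ^ N * ((1 + dist x y / h) ^ N)⁻¹)) := by
        refine mul_le_mul_of_nonneg_left (hF.trans ?_) (by positivity)
        exact mul_le_mul_of_nonneg_left h4 hD0
    _ = (((2 * π) ^ n)⁻¹ * ((2 * π) ^ N * D)) * ((h : ℝ) ^ n)⁻¹ *
        ((1 + dist x y / h) ^ N)⁻¹ := by ring
    _ ≤ (((2 * π) ^ n)⁻¹ * ((2 * π) ^ N * D) + 1) * ((h : ℝ) ^ n)⁻¹ *
        ((1 + dist x y / h) ^ N)⁻¹ := by
        have : (0:ℝ) ≤ ((h : ℝ) ^ n)⁻¹ := by positivity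
        have : (0:ℝ) ≤ ((1 + dist x y / h) ^ N)⁻¹ := by positivity
        gcongr
        linarith

/-- Pointwise bound for the commutator kernel with a Hölder weight:
`|(f(x)−f(y)) K_a^h(x,y)| ≤ C ‖f‖_{C^{0,β}} h^{−n+β} (1 + |x−y|/h)^{−(N−β)}`. -/
theorem commutator_kernel_pointwise_bound
    (n : ℕ) (hn : 1 ≤ n) (β : ℝ) (hβ0 : 0 ≤ β) (hβ1 : β ≤ 1)
    (a : Euc n × Euc n → ℂ) (ha : ContDiff ℝ (⊤ : ℕ∞) a) (hac : HasCompactSupport a) :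
    ∀ N : ℕ, ∃ C : ℝ, 0 < C ∧
      ∀ f : Euc n → ℂ, MemHolderE n β f → ∀ h : ℝ, 0 < h → ∀ x y : Euc n,
        ‖(f x - f y) * Kker n a h x y‖ ≤
          C * holderNorm n β f * h ^ (β - (n : ℝ)) *
            (1 + dist x y / h) ^ (-((N : ℝ) - β)) := by
  intro N
  obtain ⟨CK, hCK0, hCK⟩ := Kker_bound ha hac N
  refine ⟨CK, hCK0, fun f hf h hpos x y => ?_⟩
  -- nonnegativity facts
  have hsup0 : 0 ≤ supNorm n f := Real.iSup_nonneg fun x => norm_nonneg _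
  have hsemi0 : 0 ≤ holderSemi n β f :=
    Real.iSup_nonneg fun p => div_nonneg (norm_nonneg _) (Real.rpow_nonneg dist_nonneg _)
  have hhol0 : 0 ≤ holderNorm n β f := add_nonneg hsup0 hsemi0
  have hsemile : holderSemi n β f ≤ holderNorm n β f := le_add_of_nonneg_left hsup0
  set d : ℝ := dist x y with hd
  set b : ℝ := 1 + d / h with hb
  have hb1 : (1 : ℝ) ≤ b := le_add_of_nonneg_right (div_nonneg dist_nonneg hpos.le)
  have hb0 : (0 : ℝ) < b := lt_of_lt_of_le one_pos hb1
  -- rpow rewrites of the target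
  have e1 : h ^ (β - (n : ℝ)) = h ^ β * ((h : ℝ) ^ n)⁻¹ := by
    rw [Real.rpow_sub hpos, Real.rpow_natCast, div_eq_mul_inv]
  have e2 : b ^ (-((N : ℝ) - β)) = b ^ β * ((b : ℝ) ^ N)⁻¹ := by
    rw [neg_sub, Real.rpow_sub hb0, Real.rpow_natCast, div_eq_mul_inv]
  rw [norm_mul, e1, e2]
  rcases eq_or_ne x y with rfl | hxy
  · simp only [sub_self, norm_zero, zero_mul]
    have : (0:ℝ) ≤ h ^ β := Real.rpow_nonneg hpos.le β
    have : (0:ℝ) ≤ b ^ β := Real.rpow_nonneg hb0.le β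
    positivity
  -- Hölder bound on |f x - f y|
  have hfd : ‖f x - f y‖ ≤ holderSemi n β f * d ^ β := by
    have h1 : ‖f x - f y‖ / d ^ β ≤ holderSemi n β f :=
      le_ciSup hf.2 (⟨(x, y), hxy⟩ : {q : Euc n × Euc n // q.1 ≠ q.2})
    have hdpos : (0 : ℝ) < d ^ β := Real.rpow_pos_of_pos (dist_pos.2 hxy) β
    calc ‖f x - f y‖ = ‖f x - f y‖ / d ^ β * d ^ β := by field_simp
      _ ≤ holderSemi n β f * d ^ β := mul_le_mul_of_nonneg_right h1 hdpos.le
  have hdb : d ^ β ≤ h ^ β * b ^ β := by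
    have hdh : d = h * (d / h) := by field_simp
    calc d ^ β = h ^ β * (d / h) ^ β := by
          rw [← Real.mul_rpow hpos.le (div_nonneg dist_nonneg hpos.le), ← hdh]
      _ ≤ h ^ β * b ^ β := by
          refine mul_le_mul_of_nonneg_left ?_ (Real.rpow_nonneg hpos.le β)
          exact Real.rpow_le_rpow (div_nonneg dist_nonneg hpos.le)
            (le_add_of_nonneg_left zero_le_one) hβ0
  have hfb : ‖f x - f y‖ ≤ holderNorm n β f * (h ^ β * b ^ β) :=
    hfd.trans (mul_le_mul hsemile hdb (Real.rpow_nonneg dist_nonneg β) hhol0)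
  have hKb := hCK h hpos x y
  calc ‖f x - f y‖ * ‖Kker n a h x y‖
      ≤ (holderNorm n β f * (h ^ β * b ^ β)) *
        (CK * ((h : ℝ) ^ n)⁻¹ * ((b : ℝ) ^ N)⁻¹) := by
        refine mul_le_mul hfb hKb (norm_nonneg _) ?_
        have : (0:ℝ) ≤ h ^ β := Real.rpow_nonneg hpos.le β
        have : (0:ℝ) ≤ b ^ β := Real.rpow_nonneg hb0.le β
        positivity
    _ = CK * holderNorm n β f * (h ^ β * ((h : ℝ) ^ n)⁻¹) *
        (b ^ β * ((b : ℝ) ^ N)⁻¹) := by ring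


end
end
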